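/- arXiv:2208.00333 — 2 statements merged into one kernel-verified Lean document; each statement's English description precedes it below -/
import Mathlib

section
/- Let t ≥ 3, l ∈ {0, …, t−3}, and suppose C_n^l is a run of zeroes of length l. Then C_{n+k_β}^{l+1} is a run of zeroes of length l+1 if and only if β is a root of the degree-(t−l−1) polynomial P(x) = ∑_{j=0}^{t−l−1} c_{j+l+1} ∑_{i=0}^{j} a_{n+l+j−i} x^i ∈ F_q[x], with the convention c_t = 1. -/
/-!
Since `α ^ k * (α - β) = 1`, the shifted sequence `b i = a (i + k)` satisfies
`a i = b (i + 1) - β * b i`. Along the zero run `C_n^l` this forces `b (n + j) = β ^ j * b n`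
for `j ≤ l`, so `C_{n+k}^{l+1}` is a run of zeroes exactly when `b n = 0`. Telescoping the inner
sums of `P` gives `P(β) = ∑_{m ≤ t} c_m (b (n + m) - β ^ m * b n) = -b n * f(β)` by the
recurrence for `b`, and `f(β) ≠ 0` because `f` is irreducible of degree `t ≥ 2`. The degree of `P`
is read off from its top coefficient `c_t * a (n + l) = a (n + l) ≠ 0`.
-/

open Polynomial

/-- `C_n^l` is a run of `δ`'s of length `l` in the sequence `a`. -/
def IsRun {F : Type*} (a : ℤ → F) (δ : F) (n : ℤ) (l : ℕ) : Prop :=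
  (∀ j : ℕ, j < l → a (n + j) = δ) ∧ a (n - 1) ≠ δ ∧ a (n + l) ≠ δ

open Finset

section Degrees

variable {R : Type*} [Semiring R]

theorem degree_sum_range_C_mul_X_pow_lt (c : ℕ → R) (t : ℕ) :
    (∑ j ∈ range t, C (c j) * X ^ j).degree < (t : WithBot ℕ) := by
  simpa only [Fin.sum_univ_eq_sum_range (fun j => C (c j) * X ^ j)] using
    degree_sum_fin_lt (fun j : Fin t => c j)

theorem natDegree_X_pow_add_sum_range [Nontrivial R] (c : ℕ → R) (t : ℕ) :
    (X ^ t + ∑ j ∈ range t, C (c j) * X ^ j).natDegree = t := by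
  rw [natDegree_add_eq_left_of_degree_lt, natDegree_X_pow]
  simpa only [degree_X_pow] using degree_sum_range_C_mul_X_pow_lt c t

theorem natDegree_sum_C_mul_sum_C_mul_X_pow (d : ℕ → R) (u : ℕ → ℕ → R) (N : ℕ)
    (h : d N * u N N ≠ 0) :
    (∑ j ∈ range (N + 1), C (d j) * ∑ i ∈ range (j + 1), C (u j i) * X ^ i).natDegree = N := by
  have hcoeff (j : ℕ) :
      (∑ i ∈ range (j + 1), C (u j i) * X ^ i).coeff N = if N ≤ j then u j N else 0 := by
    simp
  refine natDegree_eq_of_le_of_coeff_ne_zero ?_ ?_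
  · refine natDegree_sum_le_of_forall_le _ _ fun j hj => (natDegree_C_mul_le _ _).trans ?_
    refine natDegree_sum_le_of_forall_le _ _ fun i hi => (natDegree_C_mul_X_pow_le _ _).trans ?_
    have := mem_range.mp hi; have := mem_range.mp hj; omega
  · rw [finsetSum_coeff, sum_range_succ, sum_eq_zero, zero_add, coeff_C_mul, hcoeff, if_pos le_rfl]
    · exact h
    · intro j hj
      rw [coeff_C_mul, hcoeff, if_neg (by simpa using hj), mul_zero]

end Degrees

theorem isRun_add_iff {F : Type*} {a : ℤ → F} {δ : F} (n k : ℤ) (l : ℕ) :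
    IsRun a δ (n + k) l ↔ IsRun (fun i => a (i + k)) δ n l := by
  simp only [IsRun, add_right_comm _ k, sub_add_eq_add_sub]

section Runs

variable {R : Type*} [CommRing R] {a b : ℤ → R} {β : R}

theorem eq_pow_mul_of_forall_eq_zero (hab : ∀ i, a i = b (i + 1) - β * b i) {n : ℤ} {l : ℕ}
    (hzero : ∀ j < l, a (n + j) = 0) : ∀ j ≤ l, b (n + j) = β ^ j * b n := by
  intro j hj
  induction j with
  | zero => simp
  | succ j ih =>
    have hstep : b (n + j + 1) = β * b (n + j) :=
      sub_eq_zero.mp ((hab (n + j)).symm.trans (hzero j (by omega)))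
    rw [Nat.cast_succ, ← add_assoc, hstep, ih (by omega), pow_succ']
    ring

theorem isRun_succ_iff_of_isRun (hab : ∀ i, a i = b (i + 1) - β * b i) {n : ℤ} {l : ℕ}
    (hrun : IsRun a 0 n l) : IsRun b 0 n (l + 1) ↔ b n = 0 := by
  refine ⟨fun h => by simpa using h.1 0 l.succ_pos, fun hb => ⟨?_, ?_, ?_⟩⟩
  · intro j hj
    rw [eq_pow_mul_of_forall_eq_zero hab hrun.1 j (by omega), hb, mul_zero]
  · intro hb'
    apply hrun.2.1
    rw [hab, sub_add_cancel, hb, hb', mul_zero, sub_zero]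
  · intro hb'
    apply hrun.2.2
    rw [Nat.cast_succ, ← add_assoc] at hb'
    rw [hab, eq_pow_mul_of_forall_eq_zero hab hrun.1 l le_rfl, hb, hb', mul_zero, mul_zero,
      sub_zero]

theorem sum_range_succ_mul_pow (hab : ∀ i, a i = b (i + 1) - β * b i) (s : ℤ) (m : ℕ) :
    ∑ i ∈ range (m + 1), a (s + m - i) * β ^ i = b (s + m + 1) - β ^ (m + 1) * b s := by
  induction m generalizing s with
  | zero => simp [hab]
  | succ m ih =>
    rw [sum_range_succ, add_sub_cancel_right, hab s]
    have hidx (i : ℕ) : s + ((m + 1 : ℕ) : ℤ) - i = s + 1 + m - i := by push_cast; ring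
    simp only [hidx, ih (s + 1)]
    rw [show s + 1 + (m : ℤ) + 1 = s + ((m + 1 : ℕ) : ℤ) + 1 by push_cast; ring]
    ring

theorem eval_sum_C_mul_sum_C_mul_X_pow (hab : ∀ i, a i = b (i + 1) - β * b i) (c : ℕ → R)
    {t l : ℕ} (hl : l ≤ t) {n : ℤ} (hzero : ∀ j < l, a (n + j) = 0) :
    (∑ j ∈ range (t - l), C (c (j + l + 1)) *
        ∑ i ∈ range (j + 1), C (a (n + l + j - i)) * X ^ i).eval β =
      ∑ m ∈ range (t + 1), c m * (b (n + m) - β ^ m * b n) := by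
  have hpow := eq_pow_mul_of_forall_eq_zero hab hzero
  simp only [eval_finsetSum, eval_mul, eval_C, eval_pow, eval_X, sum_range_succ_mul_pow hab,
    hpow l le_rfl]
  have hhead : ∑ m ∈ range (l + 1), c m * (b (n + m) - β ^ m * b n) = 0 :=
    sum_eq_zero fun m hm => by rw [hpow m (mem_range_succ_iff.mp hm), sub_self, mul_zero]
  rw [show t + 1 = (l + 1) + (t - l) by omega, sum_range_add, hhead, zero_add]
  refine sum_congr rfl fun j _ => ?_
  rw [show j + l + 1 = l + 1 + j by ring,
    show n + (l : ℤ) + j + 1 = n + ((l + 1 + j : ℕ) : ℤ) by push_cast; ring]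
  ring

end Runs

theorem aeval_X_pow_add_sum_range {R A : Type*} [CommSemiring R] [Semiring A] [Algebra R A]
    {c : ℕ → R} {t : ℕ} (hct : c t = 1) (x : A) :
    aeval x (X ^ t + ∑ j ∈ range t, C (c j) * X ^ j) = ∑ m ∈ range (t + 1), c m • x ^ m := by
  simp [sum_range_succ, hct, Algebra.smul_def, add_comm]

theorem LinearMap.sum_mul_map_mul_zpow_add_eq_zero {R K : Type*} [CommRing R] [Field K]
    [Algebra R K] (L : K →ₗ[R] R) {α : K} (hα : α ≠ 0) {c : ℕ → R} {s : Finset ℕ}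
    (h : ∑ m ∈ s, c m • α ^ m = 0) (γ : K) (i : ℤ) :
    ∑ m ∈ s, c m * L (γ * α ^ (i + m)) = 0 :=
  calc ∑ m ∈ s, c m * L (γ * α ^ (i + m)) = L (γ * α ^ i * ∑ m ∈ s, c m • α ^ m) := by
        simp only [zpow_add₀ hα, zpow_natCast, mul_assoc, mul_sum, mul_smul_comm, map_sum,
          map_smul, smul_eq_mul]
    _ = 0 := by rw [h, mul_zero, map_zero]

theorem LinearMap.map_mul_zpow_eq_sub {R K : Type*} [CommRing R] [Field K] [Algebra R K]
    (L : K →ₗ[R] R) {α : K} (hα : α ≠ 0) {β : R} {k : ℤ}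
    (hk : α ^ k * (α - algebraMap R K β) = 1) (γ : K) (i : ℤ) :
    L (γ * α ^ i) = L (γ * α ^ (i + 1 + k)) - β * L (γ * α ^ (i + k)) := by
  have h : γ * α ^ i = γ * α ^ (i + 1 + k) - β • (γ * α ^ (i + k)) := by
    calc γ * α ^ i = γ * α ^ i * (α ^ k * (α - algebraMap R K β)) := by rw [hk, mul_one]
      _ = _ := by
        rw [add_right_comm, zpow_add_one₀ hα, zpow_add₀ hα, Algebra.smul_def]
        ring
  rw [h, map_sub, map_smul, smul_eq_mul]

theorem minpoly.eval_ne_zero_of_two_le_natDegree {K L : Type*} [Field K] [Field L] [Algebra K L]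
    {α : L} (h : 2 ≤ (minpoly K α).natDegree) (β : K) : (minpoly K α).eval β ≠ 0 := by
  have hint : IsIntegral K α := by
    by_contra hα
    simp [minpoly.eq_zero hα] at h
  intro hβ
  have := natDegree_eq_of_degree_eq_some (n := 1)
    (degree_eq_one_of_irreducible_of_root (minpoly.irreducible hint) hβ)
  omega

theorem run_extension_iff_root_general
    (F E : Type*) [Field F] [Field E] [Algebra F E]
    (t : ℕ) (ht : 3 ≤ t)
    (α : E)
    (c : ℕ → F)
    (hmin : minpoly F α = X ^ t + ∑ j ∈ Finset.range t, C (c j) * X ^ j)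
    (hct : c t = 1)
    (γ : E)
    (a : ℤ → F) (ha : ∀ i : ℤ, a i = Algebra.trace F E (γ * α ^ i))
    (β : F)
    (k : ℤ) (hk : α ^ k * (α - algebraMap F E β) = 1)
    (l : ℕ) (hl : l ≤ t - 3)
    (n : ℤ) (hrun : IsRun a (0 : F) n l)
    (P : Polynomial F)
    (hP : P = ∑ j ∈ Finset.range (t - l), C (c (j + l + 1)) *
        ∑ i ∈ Finset.range (j + 1), C (a (n + l + j - i)) * X ^ i) :
    P.natDegree = t - l - 1 ∧ (IsRun a (0 : F) (n + k) (l + 1) ↔ P.eval β = 0) := by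
  have hdeg : (minpoly F α).natDegree = t := by rw [hmin, natDegree_X_pow_add_sum_range]
  have hroot : ∀ x : F, (minpoly F α).eval x ≠ 0 :=
    minpoly.eval_ne_zero_of_two_le_natDegree (by omega)
  have hα : α ≠ 0 := by
    rintro rfl
    exact hroot 0 (by simp [minpoly.zero])
  set b : ℤ → F := fun i => a (i + k) with hb
  have hab (i : ℤ) : a i = b (i + 1) - β * b i := by
    simp only [hb, ha]
    exact (Algebra.trace F E).map_mul_zpow_eq_sub hα hk γ i
  have hrec : ∑ m ∈ range (t + 1), c m * b (n + m) = 0 := by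
    have hf := minpoly.aeval F α
    rw [hmin, aeval_X_pow_add_sum_range hct] at hf
    simpa only [hb, ha, add_right_comm _ k] using
      (Algebra.trace F E).sum_mul_map_mul_zpow_add_eq_zero hα hf γ (n + k)
  have hPβ : P.eval β = -(b n * (minpoly F α).eval β) := by
    rw [hP, eval_sum_C_mul_sum_C_mul_X_pow hab c (by omega) hrun.1, hmin, ← coe_aeval_eq_eval,
      aeval_X_pow_add_sum_range hct, mul_sum]
    simp only [mul_sub, sum_sub_distrib, hrec, zero_sub, neg_inj, smul_eq_mul]
    exact sum_congr rfl fun m _ => by ring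
  obtain ⟨N, hN⟩ : ∃ N, t - l = N + 1 := ⟨t - l - 1, by omega⟩
  refine ⟨?_, ?_⟩
  · rw [hP, hN, Nat.add_sub_cancel]
    refine natDegree_sum_C_mul_sum_C_mul_X_pow _ (fun j i => a (n + l + j - i)) N ?_
    rw [show N + l + 1 = t by omega, hct, one_mul, add_sub_cancel_right]
    exact hrun.2.2
  · rw [isRun_add_iff, isRun_succ_iff_of_isRun hab hrun, hPβ, neg_eq_zero, mul_eq_zero,
      or_iff_left (hroot β)]

/-- if `C_n^l` is a run of zeroes of length `l` (with
`0 ≤ l ≤ t-3`), then `C_{n+kβ}^{l+1}` is a run of zeroes of length `l+1`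
iff `β` is a root of the degree-`(t-l-1)` polynomial
`P(x) = ∑_{j=0}^{t-l-1} c_{j+l+1} ∑_{i=0}^{j} a_{n+l+j-i} x^i` (with `c_t = 1`). -/
theorem run_extension_iff_root
    (F E : Type*) [Field F] [Fintype F] [Field E] [Fintype E] [Algebra F E]
    (t : ℕ) (ht : 3 ≤ t) (hrank : Module.finrank F E = t)
    (α : E) (hprim : ∀ x : E, x ≠ 0 → ∃ m : ℕ, α ^ m = x)
    (c : ℕ → F)
    (hmin : minpoly F α = X ^ t + ∑ j ∈ Finset.range t, C (c j) * X ^ j)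
    (hct : c t = 1)
    (γ : E) (hγ : γ ≠ 0)
    (a : ℤ → F) (ha : ∀ i : ℤ, a i = Algebra.trace F E (γ * α ^ i))
    (β : F) (hβ : β ≠ 0)
    (k : ℤ) (hk : α ^ k * (α - algebraMap F E β) = 1)
    (l : ℕ) (hl : l ≤ t - 3)
    (n : ℤ) (hrun : IsRun a (0 : F) n l)
    (P : Polynomial F)
    (hP : P = ∑ j ∈ Finset.range (t - l), C (c (j + l + 1)) *
        ∑ i ∈ Finset.range (j + 1), C (a (n + l + j - i)) * X ^ i) :
    P.natDegree = t - l - 1 ∧ (IsRun a (0 : F) (n + k) (l + 1) ↔ P.eval β = 0) :=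
  run_extension_iff_root_general F E t ht α c hmin hct γ a ha β k hk l hl n hrun P hP
end

section
/- Let t ≥ 3, l ∈ {0, …, t−3}, and suppose C_n^l is a run of zeroes of length l and C_{n+k_β}^{l+1} is a run of zeroes of length l+1. Then P(x) = (x − β)·P_β(x), where P(x) = ∑_{j=0}^{t−l−1} c_{j+l+1} ∑_{i=0}^{j} a_{n+l+j−i} x^i and P_β(x) = ∑_{j=0}^{t−l−2} c_{j+l+2} ∑_{i=0}^{j} a_{n+k_β+l+1+j−i} x^i, both in F_q[x], with the convention c_t = 1. -/
open Polynomial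

/-!
Since `α ^ k * (α - β) = 1`, the trace sequence obeys `a z = a (z + k + 1) - β * a (z + k)`.
Put `b m = a (n + k + l + 1 + m)`: the inner sums of `P` are the Horner polynomials of
`m ↦ b m - β * b (m - 1)`, those of `P_β` the Horner polynomials of `b`, and
`b (-1) = a (n + k + l) = 0` lies in the second run. Horner's rule turns the `(j + 1)`-st inner
sum of `P` into `(X - β)` times the `j`-th inner sum of `P_β` plus `b (j + 1)`, so
`P - (X - β) * P_β` is the constant `∑ j, c (j + l + 1) * b j`. That constant is the recurrence
`∑_{s ≤ t} c s * a (n + k + s) = 0` with its first `l + 1` terms removed, and those vanish on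
the run.
-/

open Finset

section LinearSequence

variable {F E : Type*} [Field F] [Field E] [Algebra F E] {L : E →ₗ[F] F} {α γ : E}
  {a : ℤ → F}

theorem ne_zero_of_minpoly_eq {t : ℕ} (ht : t ≠ 1) {c : ℕ → F}
    (hmin : minpoly F α = X ^ t + ∑ j ∈ range t, C (c j) * X ^ j) : α ≠ 0 := by
  rintro rfl
  have h : 1 = t := by
    simpa [coeff_X, coeff_C_mul, coeff_X_pow] using congrArg (coeff · t) hmin
  exact ht h.symm

theorem sum_algebraMap_mul_pow_eq_zero_of_minpoly_eq {t : ℕ} {c : ℕ → F}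
    (hmin : minpoly F α = X ^ t + ∑ j ∈ range t, C (c j) * X ^ j) (hct : c t = 1) :
    ∑ s ∈ range (t + 1), algebraMap F E (c s) * α ^ s = 0 := by
  have := minpoly.aeval F α
  rw [hmin] at this
  simpa [sum_range_succ, hct, add_comm, Algebra.smul_def] using this

theorem eq_sub_mul_shift_of_zpow_mul_sub_eq_one (hα : α ≠ 0) (ha : ∀ i, a i = L (γ * α ^ i))
    {β : F} {k : ℤ} (hk : α ^ k * (α - algebraMap F E β) = 1) (z : ℤ) :
    a z = a (z + k + 1) - β * a (z + k) := by
  have hpow : α ^ z = α ^ (z + k + 1) - algebraMap F E β * α ^ (z + k) := by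
    rw [zpow_add_one₀ hα, zpow_add₀ hα]
    linear_combination -(α ^ z) * hk
  rw [ha, ha, ha, hpow, mul_sub, map_sub, mul_left_comm, ← Algebra.smul_def, map_smul,
    smul_eq_mul]

theorem sum_mul_shift_eq_zero (hα : α ≠ 0) (ha : ∀ i, a i = L (γ * α ^ i)) {c : ℕ → F}
    {N : ℕ} (hc : ∑ s ∈ range N, algebraMap F E (c s) * α ^ s = 0) (z : ℤ) :
    ∑ s ∈ range N, c s * a (z + s) = 0 := by
  calc ∑ s ∈ range N, c s * a (z + s)
      = L (γ * α ^ z * ∑ s ∈ range N, algebraMap F E (c s) * α ^ s) := by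
        simp only [mul_sum, map_sum, ha, zpow_add₀ hα, zpow_natCast]
        refine sum_congr rfl fun s _ => ?_
        rw [← smul_eq_mul, ← map_smul, Algebra.smul_def]
        ring_nf
    _ = 0 := by rw [hc, mul_zero, map_zero]

end LinearSequence

section HornerPoly

variable {R : Type*} [CommRing R]

noncomputable def hornerPoly (s : ℤ → R) (j : ℕ) : R[X] :=
  ∑ i ∈ range (j + 1), C (s (j - i)) * X ^ i

theorem hornerPoly_zero (s : ℤ → R) : hornerPoly s 0 = C (s 0) := by
  simp [hornerPoly]

theorem hornerPoly_succ (s : ℤ → R) (j : ℕ) :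
    hornerPoly s (j + 1) = X * hornerPoly s j + C (s (j + 1)) := by
  rw [hornerPoly, sum_range_succ', hornerPoly, mul_sum]
  congr 1
  · refine sum_congr rfl fun i _ => ?_
    rw [pow_succ, show ((j + 1 : ℕ) : ℤ) - (i + 1 : ℕ) = j - i by push_cast; ring]
    ring
  · simp

theorem hornerPoly_succ_of_eq_sub_mul {d b : ℤ → R} {β : R}
    (hd : ∀ m, d m = b m - β * b (m - 1)) (hb : b (-1) = 0) (j : ℕ) :
    hornerPoly d (j + 1) = (X - C β) * hornerPoly b j + C (b (j + 1)) := by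
  have hlagged : ∑ i ∈ range (j + 2), C (b (j - i)) * X ^ i = hornerPoly b j := by
    rw [sum_range_succ, hornerPoly, show (j : ℤ) - (j + 1 : ℕ) = -1 by push_cast; ring, hb,
      map_zero, zero_mul, add_zero]
  calc hornerPoly d (j + 1)
      = hornerPoly b (j + 1) - C β * ∑ i ∈ range (j + 2), C (b (j - i)) * X ^ i := by
        simp only [hornerPoly, hd, mul_sum, ← sum_sub_distrib, map_sub, map_mul]
        refine sum_congr rfl fun i _ => ?_
        push_cast
        ring_nf
    _ = (X - C β) * hornerPoly b j + C (b (j + 1)) := by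
        rw [hlagged, hornerPoly_succ]
        ring

theorem sum_C_mul_hornerPoly_of_eq_sub_mul {d b : ℤ → R} {β : R}
    (hd : ∀ m, d m = b m - β * b (m - 1)) (hb : b (-1) = 0) (w : ℕ → R) (N : ℕ) :
    ∑ j ∈ range (N + 1), C (w j) * hornerPoly d j
      = (X - C β) * ∑ j ∈ range N, C (w (j + 1)) * hornerPoly b j
        + C (∑ j ∈ range (N + 1), w j * b j) := by
  have hd0 : hornerPoly d 0 = C (b 0) := by
    rw [hornerPoly_zero, hd, zero_sub, hb, mul_zero, sub_zero]
  simp only [sum_range_succ' _ N, hornerPoly_succ_of_eq_sub_mul hd hb, hd0, mul_sum, map_add,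
    map_sum, map_mul]
  rw [← add_assoc, ← sum_add_distrib]
  congr 1
  refine sum_congr rfl fun j _ => by push_cast; ring

end HornerPoly

theorem poly_factorization_of_run_extension_general
    (F E : Type*) [Field F] [Field E] [Algebra F E]
    (t : ℕ) (ht : 3 ≤ t)
    (α : E)
    (c : ℕ → F)
    (hmin : minpoly F α = X ^ t + ∑ j ∈ Finset.range t, C (c j) * X ^ j)
    (hct : c t = 1)
    (γ : E)
    (a : ℤ → F) (ha : ∀ i : ℤ, a i = Algebra.trace F E (γ * α ^ i))
    (β : F)
    (k : ℤ) (hk : α ^ k * (α - algebraMap F E β) = 1)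
    (l : ℕ) (hl : l ≤ t - 3)
    (n : ℤ)
    (hrun' : IsRun a (0 : F) (n + k) (l + 1))
    (P Pβ : Polynomial F)
    (hP : P = ∑ j ∈ Finset.range (t - l), C (c (j + l + 1)) *
        ∑ i ∈ Finset.range (j + 1), C (a (n + l + j - i)) * X ^ i)
    (hPβ : Pβ = ∑ j ∈ Finset.range (t - l - 1), C (c (j + l + 2)) *
        ∑ i ∈ Finset.range (j + 1), C (a (n + k + l + 1 + j - i)) * X ^ i) :
    P = (X - C β) * Pβ := by
  have hα : α ≠ 0 := ne_zero_of_minpoly_eq (by omega) hmin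
  have hrec := sum_mul_shift_eq_zero hα ha
    (sum_algebraMap_mul_pow_eq_zero_of_minpoly_eq hmin hct) (n + k)
  have hconst : ∑ j ∈ range (t - l), c (j + l + 1) * a (n + k + l + 1 + j) = 0 := by
    have hhead : ∑ s ∈ range (l + 1), c s * a (n + k + s) = 0 :=
      sum_eq_zero fun s hs => by rw [hrun'.1 s (mem_range.1 hs), mul_zero]
    rw [show t + 1 = l + 1 + (t - l) by omega, sum_range_add, hhead, zero_add] at hrec
    rw [← hrec]
    refine sum_congr rfl fun j _ => ?_
    push_cast
    ring_nf
  have hrel : ∀ m : ℤ,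
      a (n + l + m) = a (n + k + l + 1 + m) - β * a (n + k + l + 1 + (m - 1)) := by
    intro m
    rw [eq_sub_mul_shift_of_zpow_mul_sub_eq_one hα ha hk (n + l + m)]
    ring_nf
  have hlast : a (n + k + l + 1 + -1) = 0 := by
    rw [show n + k + l + 1 + -1 = n + k + (l : ℕ) by ring]
    exact hrun'.1 l (by omega)
  have hfactor := sum_C_mul_hornerPoly_of_eq_sub_mul (d := fun m => a (n + l + m))
    (b := fun m => a (n + k + l + 1 + m)) hrel hlast (fun j => c (j + l + 1)) (t - l - 1)
  rw [show t - l - 1 + 1 = t - l by omega, hconst, map_zero, add_zero] at hfactor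
  simp only [hornerPoly, ← add_sub_assoc] at hfactor
  rw [hP, hPβ, hfactor]
  congr 2 with j
  rw [show j + 1 + l + 1 = j + l + 2 by omega]

/-- if `C_n^l` is a run of zeroes of length `l` (with
`0 ≤ l ≤ t-3`) and `C_{n+kβ}^{l+1}` is a run of zeroes of length `l+1`, then
`P(x) = (x - β)·P_β(x)`, where
`P(x) = ∑_{j=0}^{t-l-1} c_{j+l+1} ∑_{i=0}^{j} a_{n+l+j-i} x^i` and
`P_β(x) = ∑_{j=0}^{t-l-2} c_{j+l+2} ∑_{i=0}^{j} a_{n+kβ+l+1+j-i} x^i`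
(with `c_t = 1`). -/
theorem poly_factorization_of_run_extension
    (F E : Type*) [Field F] [Fintype F] [Field E] [Fintype E] [Algebra F E]
    (t : ℕ) (ht : 3 ≤ t) (hrank : Module.finrank F E = t)
    (α : E) (hprim : ∀ x : E, x ≠ 0 → ∃ m : ℕ, α ^ m = x)
    (c : ℕ → F)
    (hmin : minpoly F α = X ^ t + ∑ j ∈ Finset.range t, C (c j) * X ^ j)
    (hct : c t = 1)
    (γ : E) (hγ : γ ≠ 0)
    (a : ℤ → F) (ha : ∀ i : ℤ, a i = Algebra.trace F E (γ * α ^ i))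
    (β : F) (hβ : β ≠ 0)
    (k : ℤ) (hk : α ^ k * (α - algebraMap F E β) = 1)
    (l : ℕ) (hl : l ≤ t - 3)
    (n : ℤ) (hrun : IsRun a (0 : F) n l)
    (hrun' : IsRun a (0 : F) (n + k) (l + 1))
    (P Pβ : Polynomial F)
    (hP : P = ∑ j ∈ Finset.range (t - l), C (c (j + l + 1)) *
        ∑ i ∈ Finset.range (j + 1), C (a (n + l + j - i)) * X ^ i)
    (hPβ : Pβ = ∑ j ∈ Finset.range (t - l - 1), C (c (j + l + 2)) *
        ∑ i ∈ Finset.range (j + 1), C (a (n + k + l + 1 + j - i)) * X ^ i) :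
    P = (X - C β) * Pβ :=
  poly_factorization_of_run_extension_general F E t ht α c hmin hct γ a ha β k hk l hl n hrun' P Pβ
    hP hPβ
end
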